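/- In Strings and Coins on the loopy star L_n with n outer vertices, the optimal score is ((n+3)/2, (n-1)/2) when n is odd, and ((n-2)/2, (n+4)/2) when n is even. -/

import Mathlib

/-- A position in Strings and Coins: a finite multigraph, with vertex set `verts`
and a multiset of (possibly loop) edges, each given as an ordered pair. -/
structure SCPos (V : Type) where
  verts : Finset V
  edges : Multiset (V × V)

variable {V : Type} [DecidableEq V]

/-- Number of edges incident to `v` (each edge, including a loop, counted once);
only being zero or nonzero matters for captures. -/
def SCPos.deg (p : SCPos V) (v : V) : ℕ :=
  (p.edges.filter (fun f => f.1 = v ∨ f.2 = v)).card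

/-- Degree of `v`, where a loop at `v` contributes 2. -/
def SCPos.degree (p : SCPos V) (v : V) : ℕ :=
  (p.edges.map (fun e => (if e.1 = v then 1 else 0) + (if e.2 = v then 1 else 0))).sum

/-- The position obtained by removing one copy of edge `e`. -/
def SCPos.remove (p : SCPos V) (e : V × V) : SCPos V :=
  ⟨p.verts, p.edges.erase e⟩

/-- The number of vertices captured by removing edge `e` from `p`:
endpoints of `e` whose degree drops to zero. -/
def SCPos.caps (p : SCPos V) (e : V × V) : ℕ :=
  (p.verts.filter (fun v => (v = e.1 ∨ v = e.2) ∧ (p.remove e).deg v = 0)).card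

/-- Optimal score `(mover's points, opponent's points)` of Strings and Coins,
under play where each player maximizes their own number of captured vertices.
A player who captures at least one vertex moves again. -/
noncomputable def SCPos.score (p : SCPos V) : ℕ × ℕ :=
  if h : p.edges = 0 then (0, 0)
  else
    (p.edges.toList.attach.map (fun ⟨e, he⟩ =>
      let s := (p.remove e).score
      let c := p.caps e
      if c = 0 then (s.2, s.1) else (s.1 + c, s.2))).foldl
      (fun best o => if best.1 ≤ o.1 then o else best) (0, 0)
termination_by p.edges.card
decreasing_by
  exact Multiset.card_erase_lt_of_mem (Multiset.mem_toList.mp he)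

/-- The cycle graph `C_n` as a Strings and Coins position. -/
def cyclePos (n : ℕ) : SCPos ℕ :=
  ⟨Finset.range n, ((List.range n).map (fun i => (i, (i + 1) % n)) : List (ℕ × ℕ))⟩

/-- The friendship graph `F_n`: `n` triangles sharing the common vertex `0`. -/
def friendshipPos (n : ℕ) : SCPos ℕ :=
  ⟨Finset.range (2 * n + 1),
   (((List.range n).flatMap fun i =>
      [(0, 2 * i + 1), (0, 2 * i + 2), (2 * i + 1, 2 * i + 2)]) : List (ℕ × ℕ))⟩

/-- The pinwheel graph `PW_n`: `n` copies of `C_4` sharing the common vertex `0`. -/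
def pinwheelPos (n : ℕ) : SCPos ℕ :=
  ⟨Finset.range (3 * n + 1),
   (((List.range n).flatMap fun i =>
      [(0, 3 * i + 1), (3 * i + 1, 3 * i + 2), (3 * i + 2, 3 * i + 3), (3 * i + 3, 0)]) :
     List (ℕ × ℕ))⟩

/-- The loopy star `L_n`: center `0`, outer vertices `1, …, n`, each joined to the
center by an edge and carrying one loop. -/
def loopyStarPos (n : ℕ) : SCPos ℕ :=
  ⟨Finset.range (n + 1),
   (((List.range n).flatMap fun i => [(0, i + 1), (i + 1, i + 1)]) : List (ℕ × ℕ))⟩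

/-- The double loopy star `L(n,2)`: center `0`, outer vertices `1, …, n`, each joined
to the center by an edge and carrying two loops. -/
def doubleLoopyStarPos (n : ℕ) : SCPos ℕ :=
  ⟨Finset.range (n + 1),
   (((List.range n).flatMap fun i => [(0, i + 1), (i + 1, i + 1), (i + 1, i + 1)]) :
     List (ℕ × ℕ))⟩

/-- The complete bipartite graph `K(1, b)` (a star with `b` leaves). -/
def starPos (b : ℕ) : SCPos ℕ :=
  ⟨Finset.range (b + 1), (((List.range b).map fun i => (0, i + 1)) : List (ℕ × ℕ))⟩

/-- The complete bipartite graph `K(2, b)`: part `{0, 1}` and part `{2, …, b+1}`. -/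
def k2bPos (b : ℕ) : SCPos ℕ :=
  ⟨Finset.range (b + 2),
   (((List.range b).flatMap fun j => [(0, j + 2), (1, j + 2)]) : List (ℕ × ℕ))⟩

/-- The balloon path `BP_n`: a path on vertices `0, …, n-1` with one loop at each vertex. -/
def balloonPathPos (n : ℕ) : SCPos ℕ :=
  ⟨Finset.range n,
   ((((List.range (n - 1)).map fun i => (i, i + 1)) ++
     ((List.range n).map fun i => (i, i))) : List (ℕ × ℕ))⟩

/-- The loopy cycle `C_(n,1)`: the cycle `C_n` with one extra loop at vertex `0`. -/
def loopyCyclePos (n : ℕ) : SCPos ℕ :=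
  ⟨Finset.range n, (0, 0) ::ₘ (cyclePos n).edges⟩

/-- The Strings and Coins position of a finite simple graph: all vertices,
and one (arbitrarily oriented) edge for each edge of the graph. -/
noncomputable def posOfGraph {W : Type} [Fintype W] [DecidableEq W]
    (G : SimpleGraph W) [DecidableRel G.Adj] : SCPos W :=
  ⟨Finset.univ, G.edgeFinset.val.map Quot.out⟩

/-!
Describe a position reachable from `L_n` by the numbers `a`, `b`, `c` of outer vertices that
still carry both edges, only their spoke, or only their loop. Every vertex that still has an edge
is captured eventually, so the two scores add up to `a + b + c`, plus one while the center keeps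
a spoke, and only the mover's score needs to be tracked. The edges at the `b`- and `c`-vertices
are free captures. A move at a full vertex captures nothing unless it cuts the last spoke, and
otherwise hands the opponent one free capture, so the turn to cut the last spoke, which also wins
the center, is decided by the parity of `a`. Induction on the number of edges shows that the
mover gets `b + c`, plus `(a + 3) / 2` for odd `a`, `(a - 2) / 2` for even `a ≥ 2`, and one for
the center when `a = 0 < b`.
-/

namespace SCPos

variable (p : SCPos V)

def live : ℕ := (p.verts.filter fun v => p.deg v ≠ 0).card

noncomputable def moveValue (e : V × V) : ℕ × ℕ :=
  if p.caps e = 0 then ((p.remove e).score.2, (p.remove e).score.1)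
  else ((p.remove e).score.1 + p.caps e, (p.remove e).score.2)

def pickBest (best o : ℕ × ℕ) : ℕ × ℕ := if best.1 ≤ o.1 then o else best

lemma foldl_pickBest (l : List (ℕ × ℕ)) (acc : ℕ × ℕ) :
    l.foldl pickBest acc ∈ acc :: l ∧ ∀ o ∈ acc :: l, o.1 ≤ (l.foldl pickBest acc).1 := by
  induction l generalizing acc with
  | nil => simp
  | cons o l ih =>
    obtain ⟨hmem, hmax⟩ := ih (pickBest acc o)
    have hpick : pickBest acc o = acc ∨ pickBest acc o = o := by
      unfold pickBest; split_ifs <;> simp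
    have hle : acc.1 ≤ (pickBest acc o).1 ∧ o.1 ≤ (pickBest acc o).1 := by
      unfold pickBest; split_ifs <;> omega
    refine ⟨?_, fun x hx => ?_⟩
    · rcases List.mem_cons.1 hmem with h | h
      · rw [List.foldl_cons, h]; rcases hpick with h' | h' <;> simp [h']
      · simp [List.foldl_cons, h]
    · have h := hmax (pickBest acc o) List.mem_cons_self
      rcases List.mem_cons.1 hx with rfl | hx
      · simpa using hle.1.trans h
      rcases List.mem_cons.1 hx with rfl | hx
      · simpa using hle.2.trans h
      · exact hmax x (List.mem_cons_of_mem _ hx)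

lemma foldl_pickBest_zero {l : List (ℕ × ℕ)} (hl : l ≠ []) :
    l.foldl pickBest (0, 0) ∈ l ∧ ∀ o ∈ l, o.1 ≤ (l.foldl pickBest (0, 0)).1 := by
  obtain ⟨o, l, rfl⟩ := List.exists_cons_of_ne_nil hl
  have : pickBest (0, 0) o = o := if_pos (Nat.zero_le _)
  rw [List.foldl_cons, this]
  exact foldl_pickBest l o

lemma score_of_edges_eq_zero (h : p.edges = 0) : p.score = (0, 0) := by
  rw [score, dif_pos h]

lemma score_eq_foldl (h : p.edges ≠ 0) :
    p.score = (p.edges.toList.map p.moveValue).foldl pickBest (0, 0) := by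
  rw [score, dif_neg h]
  conv_rhs => rw [← List.attach_map_subtype_val p.edges.toList, List.map_map]
  rfl

lemma exists_score_eq_moveValue (h : p.edges ≠ 0) : ∃ e ∈ p.edges, p.score = p.moveValue e := by
  have hl : p.edges.toList.map p.moveValue ≠ [] := by simpa using h
  obtain ⟨e, he, hsc⟩ := List.mem_map.1 (foldl_pickBest_zero hl).1
  exact ⟨e, Multiset.mem_toList.1 he, by rw [score_eq_foldl p h, hsc]⟩

lemma moveValue_fst_le_score_fst {e : V × V} (he : e ∈ p.edges) :
    (p.moveValue e).1 ≤ p.score.1 := by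
  have h : p.edges ≠ 0 := fun h0 => by simp [h0] at he
  rw [score_eq_foldl p h]
  exact (foldl_pickBest_zero (by simpa using h)).2 _
    (List.mem_map_of_mem (Multiset.mem_toList.2 he))

lemma score_fst_eq {x : ℕ} (hle : ∀ e ∈ p.edges, (p.moveValue e).1 ≤ x)
    (hex : ∃ e ∈ p.edges, (p.moveValue e).1 = x) : p.score.1 = x := by
  obtain ⟨e, he, rfl⟩ := hex
  obtain ⟨e', he', hsc⟩ := exists_score_eq_moveValue p (fun h0 => by simp [h0] at he)
  exact le_antisymm (hsc ▸ hle e' he') (moveValue_fst_le_score_fst p he)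

lemma deg_eq_deg_remove_add {e : V × V} (he : e ∈ p.edges) (v : V) :
    p.deg v = (p.remove e).deg v + if e.1 = v ∨ e.2 = v then 1 else 0 := by
  unfold deg remove
  conv_lhs => rw [← Multiset.cons_erase he]
  rw [Multiset.filter_cons]
  split_ifs <;> simp [add_comm]

lemma live_remove_add_caps {e : V × V} (he : e ∈ p.edges) :
    (p.remove e).live + p.caps e = p.live := by
  have hdeg := deg_eq_deg_remove_add p he
  unfold live caps
  rw [← Finset.card_filter_add_card_filter_not (s := p.verts.filter fun v => p.deg v ≠ 0)
    (fun v => (p.remove e).deg v ≠ 0), Finset.filter_filter, Finset.filter_filter]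
  congr 2
  · refine Finset.filter_congr fun v _ => ?_
    have := hdeg v
    exact ⟨fun h => ⟨by omega, h⟩, And.right⟩
  · refine Finset.filter_congr fun v _ => ?_
    have := hdeg v
    rw [@eq_comm _ v, @eq_comm _ v]
    split_ifs at this <;> grind

theorem score_fst_add_snd : p.score.1 + p.score.2 = p.live := by
  induction hn : Multiset.card p.edges using Nat.strong_induction_on generalizing p with
  | _ n ih =>
  by_cases h : p.edges = 0
  · have hdeg : ∀ v, p.deg v = 0 := fun v => by simp [deg, h]
    simp [score_of_edges_eq_zero p h, live, hdeg]
  obtain ⟨e, he, hsc⟩ := exists_score_eq_moveValue p h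
  have hrem := ih _ (hn ▸ Multiset.card_erase_lt_of_mem he) (p.remove e) rfl
  rw [← live_remove_add_caps p he, hsc, moveValue]
  split_ifs <;> simp only <;> omega

lemma moveValue_fst (e : V × V) :
    (p.moveValue e).1 = if p.caps e = 0 then (p.remove e).live - (p.remove e).score.1
      else (p.remove e).score.1 + p.caps e := by
  have := score_fst_add_snd (p.remove e)
  unfold moveValue; split_ifs <;> simp only; omega

lemma caps_eq_card_filter {e : V × V} (h1 : e.1 ∈ p.verts) (h2 : e.2 ∈ p.verts) :
    p.caps e = (({e.1, e.2} : Finset V).filter fun v => (p.remove e).deg v = 0).card := by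
  unfold caps
  congr 1
  ext v
  simp only [Finset.mem_filter, Finset.mem_insert, Finset.mem_singleton]
  constructor
  · exact And.right
  · rintro ⟨hv | hv, h⟩ <;> subst hv <;> simp_all

end SCPos

namespace Finset

variable {X Y : Finset V} {x : V}

lemma eq_empty_iff_card_inter_add_card_sdiff :
    X = ∅ ↔ #(X ∩ Y) + #(X \ Y) = 0 := by
  rw [card_inter_add_card_sdiff, card_eq_zero]

lemma card_inter_sdiff_erase_of_mem (hX : x ∈ X) (hY : x ∈ Y) :
    #(X ∩ Y) = #(X.erase x ∩ Y) + 1 ∧ #(X \ Y) = #(X.erase x \ Y) ∧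
      #(Y \ X.erase x) = #(Y \ X) + 1 := by
  refine ⟨?_, ?_, ?_⟩
  · rw [erase_inter, card_erase_add_one (mem_inter.2 ⟨hX, hY⟩)]
  · rw [erase_sdiff_comm, erase_eq_of_notMem fun h => (mem_sdiff.1 h).2 hY]
  · rw [sdiff_erase hY, card_insert_of_notMem fun h => (mem_sdiff.1 h).2 hX]

lemma card_inter_sdiff_erase_of_notMem (hX : x ∈ X) (hY : x ∉ Y) :
    #(X ∩ Y) = #(X.erase x ∩ Y) ∧ #(X \ Y) = #(X.erase x \ Y) + 1 ∧
      #(Y \ X.erase x) = #(Y \ X) := by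
  refine ⟨?_, ?_, ?_⟩
  · rw [erase_inter, erase_eq_of_notMem fun h => hY (mem_inter.1 h).2]
  · rw [erase_sdiff_comm, card_erase_add_one (mem_sdiff.2 ⟨hX, hY⟩)]
  · congr 1
    ext v
    simp only [mem_sdiff, mem_erase]
    grind

end Finset

namespace LoopyStar

open Finset

def loopyPos (U : Finset V) (z : V) (S L : Finset V) : SCPos V :=
  ⟨U, S.val.map (fun s => (z, s)) + L.val.map (fun l => (l, l))⟩

lemma mem_edges_loopyPos {W : Type} {U : Finset W} {z : W} {S L : Finset W} {e : W × W} :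
    e ∈ (loopyPos U z S L).edges ↔ (∃ s ∈ S, e = (z, s)) ∨ ∃ l ∈ L, e = (l, l) := by
  simp [loopyPos, eq_comm]

def moverScore (a b c : ℕ) : ℕ :=
  if a = 0 then b + c + if b = 0 then 0 else 1
  else if a % 2 = 1 then (a + 3) / 2 + b + c else (a - 2) / 2 + b + c

def liveCount (a b c : ℕ) : ℕ := a + b + c + if a + b = 0 then 0 else 1

lemma moverScore_take_loop (a b c : ℕ) : moverScore a b c + 1 = moverScore a b (c + 1) := by
  unfold moverScore; split_ifs <;> first | contradiction | omega

lemma moverScore_take_spoke (a b c : ℕ) :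
    moverScore a b c + ((if a + b = 0 then 1 else 0) + 1) = moverScore a (b + 1) c := by
  unfold moverScore; split_ifs <;> first | contradiction | omega

lemma moverScore_cut_full_spoke_le {a b : ℕ} (hab : a + b ≠ 0) (c : ℕ) :
    liveCount a b (c + 1) - moverScore a b (c + 1) ≤ moverScore (a + 1) b c := by
  unfold moverScore liveCount; split_ifs <;> first | contradiction | omega

lemma moverScore_cut_last_spoke (c : ℕ) : moverScore 0 0 (c + 1) + 1 = moverScore 1 0 c := by
  unfold moverScore; split_ifs <;> first | contradiction | omega

lemma moverScore_cut_full_loop_le (a b c : ℕ) :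
    liveCount a (b + 1) c - moverScore a (b + 1) c ≤ moverScore (a + 1) b c := by
  unfold moverScore liveCount; split_ifs <;> first | contradiction | omega

lemma moverScore_cut_full_loop {a : ℕ} (ha : a ≠ 0) :
    liveCount a 1 0 - moverScore a 1 0 = moverScore (a + 1) 0 0 := by
  unfold moverScore liveCount; split_ifs <;> first | contradiction | omega

lemma moverScore_full {n : ℕ} (hn : 1 ≤ n) :
    (moverScore n 0 0, liveCount n 0 0 - moverScore n 0 0) =
      if Odd n then ((n + 3) / 2, (n - 1) / 2) else ((n - 2) / 2, (n + 4) / 2) := by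
  unfold moverScore liveCount
  rcases Nat.even_or_odd n with h | h
  · rw [if_neg (Nat.not_odd_iff_even.2 h)]
    have := Nat.even_iff.1 h
    split_ifs <;> ext <;> simp only <;> omega
  · rw [if_pos h]
    have := Nat.odd_iff.1 h
    split_ifs <;> ext <;> simp only <;> omega

variable {U : Finset V} {z : V} {S L : Finset V}

lemma deg_loopyPos_eq_zero_iff {v : V} :
    (loopyPos U z S L).deg v = 0 ↔ v ∉ S ∧ v ∉ L ∧ (v = z → S = ∅) := by
  simp only [SCPos.deg, loopyPos, Multiset.card_eq_zero, Multiset.filter_eq_nil,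
    Multiset.mem_add, Multiset.mem_map, Finset.mem_val]
  constructor
  · intro h
    refine ⟨fun hv => h _ (Or.inl ⟨v, hv, rfl⟩) (Or.inr rfl),
      fun hv => h _ (Or.inr ⟨v, hv, rfl⟩) (Or.inl rfl), ?_⟩
    rintro rfl
    exact eq_empty_of_forall_notMem fun s hs => h _ (Or.inl ⟨s, hs, rfl⟩) (Or.inl rfl)
  · rintro ⟨hS, hL, hz⟩ f (⟨s, hs, rfl⟩ | ⟨l, hl, rfl⟩) hv
    · rcases hv with rfl | rfl
      · simp [hz rfl] at hs
      · exact hS hs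
    · exact hL (by rcases hv with rfl | rfl <;> exact hl)

lemma remove_spoke {s : V} (hs : s ∈ S) :
    (loopyPos U z S L).remove (z, s) = loopyPos U z (S.erase s) L := by
  simp only [SCPos.remove, loopyPos, SCPos.mk.injEq, true_and]
  rw [Multiset.erase_add_left_pos _ (Multiset.mem_map_of_mem _ hs), erase_val,
    Multiset.map_erase _ (Prod.mk_right_injective z)]

lemma remove_loop {l : V} (hl : l ∈ L) :
    (loopyPos U z S L).remove (l, l) = loopyPos U z S (L.erase l) := by
  simp only [SCPos.remove, loopyPos, SCPos.mk.injEq, true_and]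
  rw [Multiset.erase_add_right_pos _ (Multiset.mem_map_of_mem _ hl), erase_val,
    Multiset.map_erase _ fun a b h => congrArg Prod.fst h]

lemma caps_spoke (hz : z ∈ U) (hS : S ⊆ U.erase z) (hL : L ⊆ U.erase z) {s : V} (hs : s ∈ S) :
    (loopyPos U z S L).caps (z, s) =
      (if S.erase s = ∅ then 1 else 0) + if s ∈ L then 0 else 1 := by
  have hsz : s ≠ z := ne_of_mem_erase (hS hs)
  have hzS : z ∉ S := fun h => by simpa using hS h
  have hzL : z ∉ L := fun h => by simpa using hL h
  rw [SCPos.caps_eq_card_filter _ hz (mem_of_mem_erase (hS hs)), remove_spoke hs]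
  simp only [filter_insert, filter_singleton, deg_loopyPos_eq_zero_iff]
  by_cases h1 : S.erase s = ∅ <;> by_cases h2 : s ∈ L <;> simp [h1, h2, hsz, hzL, hzS, hsz.symm]

lemma caps_loop (hL : L ⊆ U.erase z) {l : V} (hl : l ∈ L) :
    (loopyPos U z S L).caps (l, l) = if l ∈ S then 0 else 1 := by
  obtain ⟨hlz, hlU⟩ := mem_erase.1 (hL hl)
  rw [SCPos.caps_eq_card_filter _ hlU hlU, remove_loop hl]
  simp only [filter_insert, filter_singleton, deg_loopyPos_eq_zero_iff]
  by_cases h : l ∈ S <;> simp [h, hlz]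

lemma live_loopyPos (hz : z ∈ U) (hS : S ⊆ U.erase z) (hL : L ⊆ U.erase z) :
    (loopyPos U z S L).live = liveCount #(S ∩ L) #(S \ L) #(L \ S) := by
  have hzSL : z ∉ S ∪ L := fun h => by simpa using union_subset hS hL h
  have hlive : U.filter (fun v => (loopyPos U z S L).deg v ≠ 0) =
      if S = ∅ then S ∪ L else insert z (S ∪ L) := by
    ext v
    simp only [mem_filter, ne_eq, deg_loopyPos_eq_zero_iff]
    have hU : ∀ v ∈ S ∪ L, v ∈ U := fun v hv => mem_of_mem_erase (union_subset hS hL hv)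
    split_ifs with h
    · subst h; simp only [mem_union] at hU ⊢; grind
    · simp only [mem_insert, mem_union] at hU ⊢; grind
  have hunion : #(S ∪ L) = #(S ∩ L) + #(S \ L) + #(L \ S) := by
    rw [← card_sdiff_add_card, ← card_sdiff_add_card_inter L S, inter_comm L S]; ring
  unfold SCPos.live liveCount
  rw [show (loopyPos U z S L).verts = U from rfl, hlive]
  have hS0 := eq_empty_iff_card_inter_add_card_sdiff (X := S) (Y := L)
  by_cases h : S = ∅
  · rw [if_pos h, if_pos (hS0.1 h), hunion, add_zero]
  · rw [if_neg h, if_neg (mt hS0.2 h), card_insert_of_notMem hzSL, hunion]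

def HasMoverScore (U : Finset V) (z : V) (S L : Finset V) : Prop :=
  (loopyPos U z S L).score.1 = moverScore #(S ∩ L) #(S \ L) #(L \ S)

lemma moveValue_loop_of_notMem (hL : L ⊆ U.erase z) {l : V} (hl : l ∈ L) (hlS : l ∉ S)
    (h : HasMoverScore U z S (L.erase l)) :
    ((loopyPos U z S L).moveValue (l, l)).1 = moverScore #(S ∩ L) #(S \ L) #(L \ S) := by
  obtain ⟨h1, h2, h3⟩ := card_inter_sdiff_erase_of_notMem hl hlS
  rw [SCPos.moveValue_fst, caps_loop hL hl, if_neg hlS, if_neg one_ne_zero, remove_loop hl, h,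
    inter_comm S, inter_comm S, h1, h2, h3, moverScore_take_loop]

lemma moveValue_spoke_of_notMem (hz : z ∈ U) (hS : S ⊆ U.erase z) (hL : L ⊆ U.erase z)
    {s : V} (hs : s ∈ S) (hsL : s ∉ L) (h : HasMoverScore U z (S.erase s) L) :
    ((loopyPos U z S L).moveValue (z, s)).1 = moverScore #(S ∩ L) #(S \ L) #(L \ S) := by
  obtain ⟨h1, h2, h3⟩ := card_inter_sdiff_erase_of_notMem hs hsL
  rw [SCPos.moveValue_fst, caps_spoke hz hS hL hs, if_neg hsL, if_neg (Nat.add_one_ne_zero _),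
    remove_spoke hs, h, h1, h2, ← h3]
  simp only [eq_empty_iff_card_inter_add_card_sdiff (Y := L)]
  exact moverScore_take_spoke _ _ _

lemma moveValue_spoke_of_mem (hz : z ∈ U) (hS : S ⊆ U.erase z) (hL : L ⊆ U.erase z)
    {s : V} (hs : s ∈ S) (hsL : s ∈ L) (h : HasMoverScore U z (S.erase s) L) :
    ((loopyPos U z S L).moveValue (z, s)).1 ≤ moverScore #(S ∩ L) #(S \ L) #(L \ S) ∧
      (#(S ∩ L) = 1 → #(S \ L) = 0 →
        ((loopyPos U z S L).moveValue (z, s)).1 = moverScore #(S ∩ L) #(S \ L) #(L \ S)) := by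
  obtain ⟨h1, h2, h3⟩ := card_inter_sdiff_erase_of_mem hs hsL
  have hS' : S.erase s ⊆ U.erase z := (erase_subset s S).trans hS
  rw [SCPos.moveValue_fst, caps_spoke hz hS hL hs, if_pos hsL, remove_spoke hs, h,
    live_loopyPos hz hS' hL, h1, h2, h3]
  simp only [eq_empty_iff_card_inter_add_card_sdiff (Y := L)]
  by_cases hab : #(S.erase s ∩ L) + #(S.erase s \ L) = 0
  · obtain ⟨ha, hb⟩ : #(S.erase s ∩ L) = 0 ∧ #(S.erase s \ L) = 0 := by omega
    rw [ha, hb]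
    simp [moverScore_cut_last_spoke]
  · simp only [hab, if_false, add_zero, if_true]
    exact ⟨moverScore_cut_full_spoke_le hab _, fun ha hb => by omega⟩

lemma moveValue_loop_of_mem (hz : z ∈ U) (hS : S ⊆ U.erase z) (hL : L ⊆ U.erase z)
    {l : V} (hl : l ∈ L) (hlS : l ∈ S) (h : HasMoverScore U z S (L.erase l)) :
    ((loopyPos U z S L).moveValue (l, l)).1 ≤ moverScore #(S ∩ L) #(S \ L) #(L \ S) ∧
      (#(S \ L) = 0 → #(L \ S) = 0 → #(S ∩ L) ≠ 1 →
        ((loopyPos U z S L).moveValue (l, l)).1 = moverScore #(S ∩ L) #(S \ L) #(L \ S)) := by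
  obtain ⟨h1, h2, h3⟩ := card_inter_sdiff_erase_of_mem hl hlS
  have hL' : L.erase l ⊆ U.erase z := (erase_subset l L).trans hL
  rw [SCPos.moveValue_fst, caps_loop hL hl, if_pos hlS, if_pos rfl, remove_loop hl, h,
    live_loopyPos hz hS hL', inter_comm S, inter_comm S, h1, h2, h3]
  refine ⟨moverScore_cut_full_loop_le _ _ _, fun hb hc ha => ?_⟩
  rw [hb, hc, moverScore_cut_full_loop (by omega)]

theorem hasMoverScore (hz : z ∈ U) (hS : S ⊆ U.erase z) (hL : L ⊆ U.erase z) :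
    HasMoverScore U z S L := by
  induction hn : #S + #L using Nat.strong_induction_on generalizing S L with
  | _ n ih =>
  have ih_spoke : ∀ s ∈ S, HasMoverScore U z (S.erase s) L := fun s hs =>
    ih _ (by rw [← hn, ← card_erase_add_one hs]; omega) ((erase_subset s S).trans hS) hL rfl
  have ih_loop : ∀ l ∈ L, HasMoverScore U z S (L.erase l) := fun l hl =>
    ih _ (by rw [← hn, ← card_erase_add_one hl]; omega) hS ((erase_subset l L).trans hL) rfl
  by_cases h0 : S = ∅ ∧ L = ∅
  · obtain ⟨rfl, rfl⟩ := h0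
    rw [HasMoverScore, SCPos.score_of_edges_eq_zero _ rfl]
    rfl
  apply SCPos.score_fst_eq
  · intro e he
    rcases mem_edges_loopyPos.1 he with ⟨s, hs, rfl⟩ | ⟨l, hl, rfl⟩
    · by_cases hsL : s ∈ L
      · exact (moveValue_spoke_of_mem hz hS hL hs hsL (ih_spoke s hs)).1
      · exact (moveValue_spoke_of_notMem hz hS hL hs hsL (ih_spoke s hs)).le
    · by_cases hlS : l ∈ S
      · exact (moveValue_loop_of_mem hz hS hL hl hlS (ih_loop l hl)).1
      · exact (moveValue_loop_of_notMem hL hl hlS (ih_loop l hl)).le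
  -- an optimal move: a lone loop, else a bare spoke, else the last spoke, else a loop
  by_cases hc : #(L \ S) = 0
  swap
  · obtain ⟨l, hl⟩ := card_pos.1 (Nat.pos_of_ne_zero hc)
    obtain ⟨hlL, hlS⟩ := mem_sdiff.1 hl
    exact ⟨(l, l), mem_edges_loopyPos.2 (Or.inr ⟨l, hlL, rfl⟩),
      moveValue_loop_of_notMem hL hlL hlS (ih_loop l hlL)⟩
  by_cases hb : #(S \ L) = 0
  swap
  · obtain ⟨s, hs⟩ := card_pos.1 (Nat.pos_of_ne_zero hb)
    obtain ⟨hsS, hsL⟩ := mem_sdiff.1 hs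
    exact ⟨(z, s), mem_edges_loopyPos.2 (Or.inl ⟨s, hsS, rfl⟩),
      moveValue_spoke_of_notMem hz hS hL hsS hsL (ih_spoke s hsS)⟩
  have ha : #(S ∩ L) ≠ 0 := by
    have hS' := card_inter_add_card_sdiff S L
    have hL' := card_inter_add_card_sdiff L S
    rw [inter_comm] at hL'
    rw [← card_eq_zero, ← card_eq_zero] at h0
    omega
  obtain ⟨x, hx⟩ := card_pos.1 (Nat.pos_of_ne_zero ha)
  obtain ⟨hxS, hxL⟩ := mem_inter.1 hx
  by_cases ha1 : #(S ∩ L) = 1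
  · exact ⟨(z, x), mem_edges_loopyPos.2 (Or.inl ⟨x, hxS, rfl⟩),
      (moveValue_spoke_of_mem hz hS hL hxS hxL (ih_spoke x hxS)).2 ha1 hb⟩
  · exact ⟨(x, x), mem_edges_loopyPos.2 (Or.inr ⟨x, hxL, rfl⟩),
      (moveValue_loop_of_mem hz hS hL hxL hxS (ih_loop x hxL)).2 hb hc ha1⟩

theorem score_loopyPos (hz : z ∈ U) (hS : S ⊆ U.erase z) (hL : L ⊆ U.erase z) :
    (loopyPos U z S L).score = (moverScore #(S ∩ L) #(S \ L) #(L \ S),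
      liveCount #(S ∩ L) #(S \ L) #(L \ S) - moverScore #(S ∩ L) #(S \ L) #(L \ S)) := by
  have hfst : (loopyPos U z S L).score.1 = _ := hasMoverScore hz hS hL
  have hsum := SCPos.score_fst_add_snd (loopyPos U z S L)
  rw [live_loopyPos hz hS hL] at hsum
  ext
  · exact hfst
  · simp only; omega

lemma loopyStarPos_eq_loopyPos (n : ℕ) :
    loopyStarPos n =
      loopyPos (range (n + 1)) 0 ((range n).map (addRightEmbedding 1))
        ((range n).map (addRightEmbedding 1)) := by
  simp only [loopyStarPos, loopyPos, SCPos.mk.injEq, true_and, map_val, range_val,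
    Multiset.map_map]
  rw [← Multiset.coe_bind, Multiset.coe_range, ← Multiset.bind_singleton,
    ← Multiset.bind_singleton, ← Multiset.bind_add]
  rfl

lemma map_addRightEmbedding_range_subset (n : ℕ) :
    (range n).map (addRightEmbedding 1) ⊆ (range (n + 1)).erase 0 := by
  intro x hx
  obtain ⟨i, hi, rfl⟩ := mem_map.1 hx
  simp only [mem_erase, mem_range, addRightEmbedding_apply] at hi ⊢
  omega

theorem score_loopyStarPos (n : ℕ) :
    (loopyStarPos n).score = (moverScore n 0 0, liveCount n 0 0 - moverScore n 0 0) := by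
  have hS := map_addRightEmbedding_range_subset n
  rw [loopyStarPos_eq_loopyPos, score_loopyPos (by simp) hS hS, inter_self, sdiff_self,
    bot_eq_empty, card_empty, card_map, card_range]

end LoopyStar

/-- The optimal score on the loopy star `L_n` is `((n+3)/2, (n-1)/2)` for odd `n`
and `((n-2)/2, (n+4)/2)` for even `n`. -/
theorem stmt11 (n : ℕ) (hn : 1 ≤ n) :
    (loopyStarPos n).score =
      if Odd n then ((n + 3) / 2, (n - 1) / 2) else ((n - 2) / 2, (n + 4) / 2) := by
  rw [LoopyStar.score_loopyStarPos, LoopyStar.moverScore_full hn]
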